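/- arXiv:1310.5240 — 5 statements merged into one kernel-verified Lean document; each statement's English description precedes it below -/
import Mathlib

section
/- If there exists a CMDRR(n,k), a SAMDRR(m), and two mutually orthogonal latin squares of order n, then there exists a CMDRR(mn, mk). -/
open scoped Classical

/-- A mixed doubles game: an unordered pair of teams, each team being a
(man, woman) pair, for `n` men and `n` women indexed by `Fin n`. -/
abbrev Game (n : ℕ) := Sym2 (Fin n × Fin n)

/-- A game is valid if its two teams have distinct men and distinct women. -/
def Game.valid {n : ℕ} (g : Game n) : Prop :=
  ∃ a b : Fin n × Fin n, g = s(a, b) ∧ a.1 ≠ b.1 ∧ a.2 ≠ b.2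

/-- Man `m` plays in game `g`. -/
def Game.manIn {n : ℕ} (m : Fin n) (g : Game n) : Prop :=
  ∃ a b : Fin n × Fin n, g = s(a, b) ∧ a.1 = m

/-- Woman `w` plays in game `g`. -/
def Game.womanIn {n : ℕ} (w : Fin n) (g : Game n) : Prop :=
  ∃ a b : Fin n × Fin n, g = s(a, b) ∧ a.2 = w

/-- Man `m` and woman `w` are partners (teammates) in game `g`. -/
def Game.partners {n : ℕ} (m w : Fin n) (g : Game n) : Prop :=
  (m, w) ∈ g

/-- Man `m` and woman `w` are opponents in game `g` (on different teams). -/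
def Game.opposesMW {n : ℕ} (m w : Fin n) (g : Game n) : Prop :=
  ∃ a b : Fin n × Fin n, g = s(a, b) ∧ a.1 = m ∧ b.2 = w

/-- Men `m` and `m'` are opponents in game `g`. -/
def Game.opposesMM {n : ℕ} (m m' : Fin n) (g : Game n) : Prop :=
  ∃ a b : Fin n × Fin n, g = s(a, b) ∧ a.1 = m ∧ b.1 = m'

/-- Women `w` and `w'` are opponents in game `g`. -/
def Game.opposesWW {n : ℕ} (w w' : Fin n) (g : Game n) : Prop :=
  ∃ a b : Fin n × Fin n, g = s(a, b) ∧ a.2 = w ∧ b.2 = w'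

/-- A complete mixed doubles round robin tournament CMDRR(n,k). -/
structure CMDRR (n k : ℕ) where
  /-- The spouse pairs (man, woman). -/
  spouses : Finset (Fin n × Fin n)
  spouses_card : spouses.card = k
  spouses_inj1 : ∀ p ∈ spouses, ∀ q ∈ spouses, p.1 = q.1 → p = q
  spouses_inj2 : ∀ p ∈ spouses, ∀ q ∈ spouses, p.2 = q.2 → p = q
  /-- The multiset of games. -/
  games : Multiset (Game n)
  valid : ∀ g ∈ games, g.valid
  /-- (i) no game contains both members of a spouse pair. -/
  no_spouse_game : ∀ g ∈ games, ∀ p ∈ spouses, ¬ (Game.manIn p.1 g ∧ Game.womanIn p.2 g)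
  /-- (ii) every non-spouse man-woman pair partners exactly once ... -/
  partners_once : ∀ m w : Fin n, (m, w) ∉ spouses →
    games.countP (Game.partners m w) = 1
  /-- ... and opposes exactly once. -/
  opposesMW_once : ∀ m w : Fin n, (m, w) ∉ spouses →
    games.countP (Game.opposesMW m w) = 1
  /-- (iii) a spoused man opposes every other man exactly once. -/
  spousedM_opposes : ∀ m ∈ spouses.image Prod.fst, ∀ m' : Fin n, m' ≠ m →
    games.countP (Game.opposesMM m m') = 1
  /-- (iii) a spoused woman opposes every other woman exactly once. -/
  spousedW_opposes : ∀ w ∈ spouses.image Prod.snd, ∀ w' : Fin n, w' ≠ w →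
    games.countP (Game.opposesWW w w') = 1
  /-- (iv) an unspoused man opposes exactly one other unspoused man exactly twice,
  and all other men exactly once. -/
  unspousedM_opposes : ∀ m : Fin n, m ∉ spouses.image Prod.fst →
    ∃ m' : Fin n, m' ≠ m ∧ m' ∉ spouses.image Prod.fst ∧
      games.countP (Game.opposesMM m m') = 2 ∧
      ∀ m'' : Fin n, m'' ≠ m → m'' ≠ m' → games.countP (Game.opposesMM m m'') = 1
  /-- (iv) likewise for unspoused women. -/
  unspousedW_opposes : ∀ w : Fin n, w ∉ spouses.image Prod.snd →
    ∃ w' : Fin n, w' ≠ w ∧ w' ∉ spouses.image Prod.snd ∧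
      games.countP (Game.opposesWW w w') = 2 ∧
      ∀ w'' : Fin n, w'' ≠ w → w'' ≠ w' → games.countP (Game.opposesWW w w'') = 1

/-- A round: a multiset of games in which each player appears at most once. -/
def IsRound {n : ℕ} (r : Multiset (Game n)) : Prop :=
  (∀ m : Fin n, r.countP (Game.manIn m) ≤ 1) ∧
  (∀ w : Fin n, r.countP (Game.womanIn w) ≤ 1)

/-- A full round: all players play if `n` is even; all but exactly one man and
one woman play if `n` is odd. -/
def FullRound {n : ℕ} (r : Multiset (Game n)) : Prop :=
  IsRound r ∧
  ((Even n ∧ (∀ m : Fin n, r.countP (Game.manIn m) = 1) ∧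
      (∀ w : Fin n, r.countP (Game.womanIn w) = 1)) ∨
   (¬ Even n ∧ (∃! m : Fin n, r.countP (Game.manIn m) = 0) ∧
      (∃! w : Fin n, r.countP (Game.womanIn w) = 0)))

/-- A latin square of order `n`. -/
def IsLatinSquare {n : ℕ} (L : Fin n × Fin n → Fin n) : Prop :=
  (∀ i : Fin n, Function.Bijective (fun j : Fin n => L (i, j))) ∧
  (∀ j : Fin n, Function.Bijective (fun i : Fin n => L (i, j)))

/-- Two mutually orthogonal latin squares of order `n`. -/
def MOLS {n : ℕ} (L₁ L₂ : Fin n × Fin n → Fin n) : Prop :=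
  IsLatinSquare L₁ ∧ IsLatinSquare L₂ ∧
  Function.Bijective (fun p : Fin n × Fin n => (L₁ p, L₂ p))

/-!
Index the players of the product by pairs `(i, x)`, `i` a player of the SAMDRR `S` and `x` one
of the CMDRR `T`. For every spouse pair `A` of `S`, a copy of `T` is played between the men of
block `A.1` and the women of block `A.2`; for every game of `S` with teams `A`, `B` and every cell
`P` of the squares, the team `(A, P)` plays the team `(B, (L₁ P, L₂ P))`.

Each of the four ways in which two players meet (partners, mixed opponents, male opponents,
female opponents) picks two coordinates out of the ordered pair of teams, so it commutes with
this product. The latin and orthogonality properties make every inner pair get picked exactly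
once in each family of cross games. Hence two players with block pair `X` and inner pair `Y`
meet as often as `Y` does in `T` when `X` is picked from a spouse pair of `S`, and as often as
`X` does in `S` otherwise, and the axioms of `S` and `T` carry over to the product.
-/

inductive Sex
  | man
  | woman

def Sex.of {α : Type*} : Sex → α × α → α
  | .man => Prod.fst
  | .woman => Prod.snd

inductive Meeting
  | partners
  | opposesMW
  | opposes (s : Sex)

def Meeting.pick {α : Type*} : Meeting → α × α → α × α → α × α
  | .partners, p, _ => p
  | .opposesMW, p, q => (p.1, q.2)
  | .opposes s, p, q => (s.of p, s.of q)

lemma Meeting.pick_ne_pick_swap {α : Type*} (r : Meeting) {A B : α × α} (h₁ : A.1 ≠ B.1)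
    (h₂ : A.2 ≠ B.2) : r.pick A B ≠ r.pick B A := by
  rcases r with _ | _ | _ | _ <;> simp [Meeting.pick, Sex.of, Prod.ext_iff, h₁, h₂]

lemma Meeting.pick_self {α : Type*} {r : Meeting} (hr : r = .partners ∨ r = .opposesMW)
    (A : α × α) : r.pick A A = A := by
  rcases hr with rfl | rfl <;> rfl

lemma Sym2.mk_out {α : Type*} (z : Sym2 α) : s(z.out.1, z.out.2) = z :=
  Quot.out_eq z

def Game.Meets {n : ℕ} (r : Meeting) (x : Fin n × Fin n) (g : Game n) : Prop :=
  ∃ p q, g = s(p, q) ∧ r.pick p q = x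

namespace Game

variable {n : ℕ}

lemma meets_mk {r : Meeting} {x p q : Fin n × Fin n} :
    Meets r x s(p, q) ↔ r.pick p q = x ∨ r.pick q p = x := by
  constructor
  · rintro ⟨p', q', h, rfl⟩
    rcases Sym2.eq_iff.mp h with ⟨rfl, rfl⟩ | ⟨rfl, rfl⟩ <;> simp
  · rintro (h | h)
    exacts [⟨p, q, rfl, h⟩, ⟨q, p, Sym2.eq_swap, h⟩]

lemma partners_eq_meets (a b : Fin n) : partners a b = Meets .partners (a, b) := by
  ext g
  induction g using Sym2.ind
  simp [partners, meets_mk, Meeting.pick, eq_comm]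

lemma opposesMW_eq_meets (a b : Fin n) : opposesMW a b = Meets .opposesMW (a, b) := by
  ext g
  simp [opposesMW, Meets, Meeting.pick]

lemma opposesMM_eq_meets (a b : Fin n) : opposesMM a b = Meets (.opposes .man) (a, b) := by
  ext g
  simp [opposesMM, Meets, Meeting.pick, Sex.of]

lemma opposesWW_eq_meets (a b : Fin n) : opposesWW a b = Meets (.opposes .woman) (a, b) := by
  ext g
  simp [opposesWW, Meets, Meeting.pick, Sex.of]

lemma valid_mk {p q : Fin n × Fin n} : valid s(p, q) ↔ p.1 ≠ q.1 ∧ p.2 ≠ q.2 := by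
  constructor
  · rintro ⟨p', q', h, h₁, h₂⟩
    rcases Sym2.eq_iff.mp h with ⟨rfl, rfl⟩ | ⟨rfl, rfl⟩
    exacts [⟨h₁, h₂⟩, ⟨h₁.symm, h₂.symm⟩]
  · rintro ⟨h₁, h₂⟩
    exact ⟨p, q, rfl, h₁, h₂⟩

lemma manIn_mk {a : Fin n} {p q : Fin n × Fin n} : manIn a s(p, q) ↔ p.1 = a ∨ q.1 = a := by
  constructor
  · rintro ⟨p', q', h, rfl⟩
    rcases Sym2.eq_iff.mp h with ⟨rfl, rfl⟩ | ⟨rfl, rfl⟩ <;> simp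
  · rintro (h | h)
    exacts [⟨p, q, rfl, h⟩, ⟨q, p, Sym2.eq_swap, h⟩]

lemma womanIn_mk {b : Fin n} {p q : Fin n × Fin n} :
    womanIn b s(p, q) ↔ p.2 = b ∨ q.2 = b := by
  constructor
  · rintro ⟨p', q', h, rfl⟩
    rcases Sym2.eq_iff.mp h with ⟨rfl, rfl⟩ | ⟨rfl, rfl⟩ <;> simp
  · rintro (h | h)
    exacts [⟨p, q, rfl, h⟩, ⟨q, p, Sym2.eq_swap, h⟩]

lemma manIn_and_womanIn_iff {a b : Fin n} {g : Game n} :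
    manIn a g ∧ womanIn b g ↔ Meets .partners (a, b) g ∨ Meets .opposesMW (a, b) g := by
  induction g using Sym2.ind
  simp only [manIn_mk, womanIn_mk, meets_mk, Meeting.pick, Prod.ext_iff]
  tauto

lemma not_meets_opposes_self {s : Sex} {a : Fin n} {g : Game n} (hg : g.valid) :
    ¬ Meets (.opposes s) (a, a) g := by
  obtain ⟨p, q, rfl, h₁, h₂⟩ := hg
  cases s <;> simp [meets_mk, Meeting.pick, Sex.of] <;> grind

end Game

namespace Multiset

variable {α β : Type*}

lemma countP_bind (s : Multiset α) (f : α → Multiset β) (p : β → Prop) [DecidablePred p] :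
    (s.bind f).countP p = (s.map fun a => (f a).countP p).sum := by
  induction s using Multiset.induction with
  | empty => simp
  | cons a s ih => simp [countP_add, ih]

lemma sum_map_boole (s : Multiset α) (p : α → Prop) [DecidablePred p] :
    (s.map fun a => if p a then 1 else 0).sum = s.countP p := by
  induction s using Multiset.induction with
  | empty => simp
  | cons a s ih => by_cases h : p a <;> simp [h, ih, Nat.add_comm]

end Multiset

namespace CMDRR

variable {n k : ℕ} (T : CMDRR n k)

lemma injOn_sexOf (s : Sex) : Set.InjOn s.of (T.spouses : Set (Fin n × Fin n)) := by
  cases s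
  exacts [T.spouses_inj1, T.spouses_inj2]

lemma injOn_pick_self (r : Meeting) :
    Set.InjOn (fun A => r.pick A A) (T.spouses : Set (Fin n × Fin n)) := by
  cases r with
  | partners => exact Set.injOn_id _
  | opposesMW => exact Set.injOn_id _
  | opposes s => exact fun A hA B hB h => T.injOn_sexOf s hA hB (Prod.ext_iff.mp h).1

lemma countP_meets_pick_self (r : Meeting) {A : Fin n × Fin n} (hA : A ∈ T.spouses) :
    T.games.countP (Game.Meets r (r.pick A A)) = 0 := by
  refine Multiset.countP_eq_zero.mpr fun g hg hmeet => ?_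
  cases r with
  | opposes s => exact Game.not_meets_opposes_self (T.valid g hg) hmeet
  | _ => exact T.no_spouse_game g hg A hA (Game.manIn_and_womanIn_iff.mpr (by tauto))

lemma countP_meets_eq_one_of_not_mem {r : Meeting} (hr : r = .partners ∨ r = .opposesMW)
    {X : Fin n × Fin n} (hX : X ∉ T.spouses) : T.games.countP (Game.Meets r X) = 1 := by
  rcases hr with rfl | rfl
  · rw [← Game.partners_eq_meets]
    exact T.partners_once X.1 X.2 hX
  · rw [← Game.opposesMW_eq_meets]
    exact T.opposesMW_once X.1 X.2 hX

lemma countP_opposes_of_mem (s : Sex) {a : Fin n} (ha : a ∈ T.spouses.image s.of)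
    {a' : Fin n} (ha' : a' ≠ a) : T.games.countP (Game.Meets (.opposes s) (a, a')) = 1 := by
  cases s
  · rw [← Game.opposesMM_eq_meets]
    exact T.spousedM_opposes a ha a' ha'
  · rw [← Game.opposesWW_eq_meets]
    exact T.spousedW_opposes a ha a' ha'

lemma exists_opposes_twice (s : Sex) {a : Fin n} (ha : a ∉ T.spouses.image s.of) :
    ∃ a', a' ≠ a ∧ a' ∉ T.spouses.image s.of ∧
      T.games.countP (Game.Meets (.opposes s) (a, a')) = 2 ∧
      ∀ a'', a'' ≠ a → a'' ≠ a' →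
        T.games.countP (Game.Meets (.opposes s) (a, a'')) = 1 := by
  cases s
  · simp only [← Game.opposesMM_eq_meets]
    exact T.unspousedM_opposes a ha
  · simp only [← Game.opposesWW_eq_meets]
    exact T.unspousedW_opposes a ha

lemma image_sexOf_spouses_eq_univ (S : CMDRR n n) (s : Sex) :
    S.spouses.image s.of = Finset.univ :=
  Finset.eq_univ_of_card _ <| by
    rw [Finset.card_image_of_injOn (S.injOn_sexOf s), S.spouses_card, Fintype.card_fin]

end CMDRR

section LatinSquare

variable {n : ℕ} {L L₁ L₂ : Fin n × Fin n → Fin n}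

lemma IsLatinSquare.bijective_fst_prod (hL : IsLatinSquare L) :
    Function.Bijective fun p => (p.1, L p) :=
  Finite.injective_iff_bijective.mp fun ⟨u, v⟩ ⟨u', v'⟩ h => by
    obtain ⟨rfl, h⟩ := Prod.ext_iff.mp h
    rw [(hL.1 u).1 h]

lemma IsLatinSquare.bijective_snd_prod (hL : IsLatinSquare L) :
    Function.Bijective fun p => (p.2, L p) :=
  Finite.injective_iff_bijective.mp fun ⟨u, v⟩ ⟨u', v'⟩ h => by
    obtain ⟨rfl, h⟩ := Prod.ext_iff.mp h
    rw [(hL.2 v).1 h]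

lemma MOLS.bijective_pick (hL : MOLS L₁ L₂) (r : Meeting) :
    Function.Bijective fun p => r.pick p (L₁ p, L₂ p) := by
  rcases r with _ | _ | _ | _
  exacts [Function.bijective_id, hL.2.1.bijective_fst_prod, hL.1.bijective_fst_prod,
    hL.2.1.bijective_snd_prod]

lemma MOLS.bijective_pick_swap (hL : MOLS L₁ L₂) (r : Meeting) :
    Function.Bijective fun p => r.pick (L₁ p, L₂ p) p := by
  rcases r with _ | _ | _ | _
  exacts [hL.2.2, Prod.swap_bijective.comp hL.1.bijective_snd_prod,
    Prod.swap_bijective.comp hL.1.bijective_fst_prod,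
    Prod.swap_bijective.comp hL.2.1.bijective_snd_prod]

lemma Function.Bijective.card_filter_eq {α β : Type*} [Fintype α] [DecidableEq β]
    {f : α → β} (hf : Function.Bijective f) (b : β) :
    (Finset.univ.filter fun a => f a = b).card = 1 := by
  obtain ⟨a, rfl, ha⟩ := hf.existsUnique b
  exact Finset.card_eq_one.mpr ⟨a, by ext; simpa using ⟨ha _, fun h => h ▸ rfl⟩⟩

end LatinSquare

section Product

variable {m n k k' : ℕ} {L₁ L₂ : Fin n × Fin n → Fin n}

-- The product's player `finProdFinEquiv (i, x)` is player `x` of block `i`.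
def prodTeam (A : Fin m × Fin m) (P : Fin n × Fin n) : Fin (m * n) × Fin (m * n) :=
  (finProdFinEquiv (A.1, P.1), finProdFinEquiv (A.2, P.2))

lemma prodTeam_inj {A B : Fin m × Fin m} {P Q : Fin n × Fin n} :
    prodTeam A P = prodTeam B Q ↔ A = B ∧ P = Q := by
  simp only [prodTeam, Prod.ext_iff, EmbeddingLike.apply_eq_iff_eq]
  tauto

lemma exists_prodTeam_eq (x : Fin (m * n) × Fin (m * n)) : ∃ X Y, prodTeam X Y = x := by
  obtain ⟨⟨i, u⟩, hu⟩ := finProdFinEquiv.surjective x.1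
  obtain ⟨⟨j, v⟩, hv⟩ := finProdFinEquiv.surjective x.2
  exact ⟨(i, j), (u, v), Prod.ext hu hv⟩

lemma Sex.of_prodTeam (s : Sex) (A : Fin m × Fin m) (P : Fin n × Fin n) :
    s.of (prodTeam A P) = finProdFinEquiv (s.of A, s.of P) := by
  cases s <;> rfl

lemma Meeting.pick_prodTeam (r : Meeting) (A B : Fin m × Fin m) (P Q : Fin n × Fin n) :
    r.pick (prodTeam A P) (prodTeam B Q) = prodTeam (r.pick A B) (r.pick P Q) := by
  rcases r with _ | _ | _ | _ <;> rfl

lemma Game.meets_prodTeam_mk {r : Meeting} {X A B : Fin m × Fin m} {Y P Q : Fin n × Fin n} :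
    Meets r (prodTeam X Y) s(prodTeam A P, prodTeam B Q) ↔
      (r.pick A B = X ∧ r.pick P Q = Y) ∨ (r.pick B A = X ∧ r.pick Q P = Y) := by
  simp only [meets_mk, Meeting.pick_prodTeam, prodTeam_inj]

lemma Game.valid_prodTeam_mk {A B : Fin m × Fin m} {P Q : Fin n × Fin n}
    (h₁ : A.1 ≠ B.1 ∨ P.1 ≠ Q.1) (h₂ : A.2 ≠ B.2 ∨ P.2 ≠ Q.2) :
    valid s(prodTeam A P, prodTeam B Q) := by
  simp only [valid_mk, prodTeam, ne_eq, EmbeddingLike.apply_eq_iff_eq, Prod.ext_iff]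
  tauto

def productSpouses (S : CMDRR m k') (T : CMDRR n k) : Finset (Fin (m * n) × Fin (m * n)) :=
  (S.spouses ×ˢ T.spouses).image fun AP => prodTeam AP.1 AP.2

lemma prodTeam_mem_productSpouses {S : CMDRR m k'} {T : CMDRR n k} {X : Fin m × Fin m}
    {Y : Fin n × Fin n} :
    prodTeam X Y ∈ productSpouses S T ↔ X ∈ S.spouses ∧ Y ∈ T.spouses := by
  simp [productSpouses, prodTeam_inj]

lemma card_productSpouses (S : CMDRR m k') (T : CMDRR n k) :
    (productSpouses S T).card = k' * k := by
  rw [productSpouses, Finset.card_image_of_injective, Finset.card_product, S.spouses_card,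
    T.spouses_card]
  exact fun _ _ h => Prod.ext_iff.mpr (prodTeam_inj.mp h)

lemma mem_image_sexOf_productSpouses {S : CMDRR m k'} {T : CMDRR n k} (s : Sex) {i : Fin m}
    {x : Fin n} : finProdFinEquiv (i, x) ∈ (productSpouses S T).image s.of ↔
      i ∈ S.spouses.image s.of ∧ x ∈ T.spouses.image s.of := by
  simp only [productSpouses, Finset.image_image, Finset.mem_image, Finset.mem_product,
    Function.comp_def, Sex.of_prodTeam, EmbeddingLike.apply_eq_iff_eq, Prod.ext_iff]
  aesop

lemma injOn_sexOf_productSpouses (S : CMDRR m k') (T : CMDRR n k) (s : Sex) :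
    Set.InjOn s.of (productSpouses S T : Set (Fin (m * n) × Fin (m * n))) := by
  simp only [productSpouses, Finset.coe_image, Set.InjOn, Set.mem_image, Finset.mem_coe,
    Finset.mem_product]
  rintro _ ⟨⟨A, P⟩, ⟨hA, hP⟩, rfl⟩ _ ⟨⟨B, Q⟩, ⟨hB, hQ⟩, rfl⟩ h
  simp only [Sex.of_prodTeam, EmbeddingLike.apply_eq_iff_eq, Prod.ext_iff] at h
  rw [S.injOn_sexOf s hA hB h.1, T.injOn_sexOf s hP hQ h.2]

def blockGames (S : CMDRR m k') (T : CMDRR n k) : Multiset (Game (m * n)) :=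
  S.spouses.val.bind fun A => T.games.map (Sym2.map (prodTeam A))

def crossGames (A B : Fin m × Fin m) (L₁ L₂ : Fin n × Fin n → Fin n) :
    Multiset (Game (m * n)) :=
  Finset.univ.val.map fun P => s(prodTeam A P, prodTeam B (L₁ P, L₂ P))

noncomputable def productGames (S : CMDRR m k') (T : CMDRR n k)
    (L₁ L₂ : Fin n × Fin n → Fin n) : Multiset (Game (m * n)) :=
  blockGames S T + S.games.bind fun g => crossGames g.out.1 g.out.2 L₁ L₂

lemma Game.meets_map_prodTeam {r : Meeting} {A X : Fin m × Fin m} {Y : Fin n × Fin n}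
    {g : Game n} :
    Meets r (prodTeam X Y) (g.map (prodTeam A)) ↔ r.pick A A = X ∧ Meets r Y g := by
  induction g using Sym2.ind
  rw [Sym2.map_mk, meets_prodTeam_mk, meets_mk]
  tauto

lemma countP_blockGames (S : CMDRR m k') (T : CMDRR n k) (r : Meeting) (X : Fin m × Fin m)
    (Y : Fin n × Fin n) : (blockGames S T).countP (Game.Meets r (prodTeam X Y)) =
      if ∃ A ∈ S.spouses, r.pick A A = X then T.games.countP (Game.Meets r Y) else 0 := by
  have hblock (A) :
      (T.games.map (Sym2.map (prodTeam A))).countP (Game.Meets r (prodTeam X Y)) =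
        if r.pick A A = X then T.games.countP (Game.Meets r Y) else 0 := by
    rw [Multiset.countP_map, Multiset.countP_eq_card_filter]
    split_ifs with h <;> simp [Game.meets_map_prodTeam, h]
  rw [blockGames, Multiset.countP_bind]
  simp only [hblock]
  change ∑ A ∈ S.spouses, _ = _
  split_ifs with h
  · obtain ⟨A, hA, rfl⟩ := h
    rw [Finset.sum_eq_single_of_mem A hA fun B hB hBA => if_neg fun h =>
      hBA (S.injOn_pick_self r hB hA h), if_pos rfl]
  · exact Finset.sum_eq_zero fun A hA => if_neg fun h' => h ⟨A, hA, h'⟩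

lemma countP_crossGames (hL : MOLS L₁ L₂) (r : Meeting)
    {A B : Fin m × Fin m} (hAB : Game.valid s(A, B)) (X : Fin m × Fin m) (Y : Fin n × Fin n) :
    (crossGames A B L₁ L₂).countP (Game.Meets r (prodTeam X Y)) =
      if Game.Meets r X s(A, B) then 1 else 0 := by
  have hne : r.pick A B ≠ r.pick B A := r.pick_ne_pick_swap (Game.valid_mk.mp hAB).1
    (Game.valid_mk.mp hAB).2
  rw [crossGames, Multiset.countP_map, Game.meets_mk]
  simp only [Game.meets_prodTeam_mk]
  by_cases h₁ : r.pick A B = X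
  · have h₂ : r.pick B A ≠ X := fun h => hne (h₁.trans h.symm)
    simp only [h₁, h₂, true_and, false_and, or_false, if_true]
    exact (hL.bijective_pick r).card_filter_eq Y
  · by_cases h₂ : r.pick B A = X
    · simp only [h₁, h₂, true_and, false_and, false_or, or_true, if_true]
      exact (hL.bijective_pick_swap r).card_filter_eq Y
    · simp [h₁, h₂]

lemma countP_productGames (S : CMDRR m k') (T : CMDRR n k) (hL : MOLS L₁ L₂) (r : Meeting)
    (X : Fin m × Fin m) (Y : Fin n × Fin n) :
    (productGames S T L₁ L₂).countP (Game.Meets r (prodTeam X Y)) =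
      if ∃ A ∈ S.spouses, r.pick A A = X then T.games.countP (Game.Meets r Y)
      else S.games.countP (Game.Meets r X) := by
  have hcross : (S.games.bind fun g => crossGames g.out.1 g.out.2 L₁ L₂).countP
      (Game.Meets r (prodTeam X Y)) = S.games.countP (Game.Meets r X) := by
    rw [Multiset.countP_bind, ← Multiset.sum_map_boole]
    refine congrArg Multiset.sum (Multiset.map_congr rfl fun g hg => ?_)
    rw [countP_crossGames hL r ((Sym2.mk_out g).symm ▸ S.valid g hg), Sym2.mk_out]
  rw [productGames, Multiset.countP_add, hcross, countP_blockGames]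
  split_ifs with h
  · obtain ⟨A, hA, rfl⟩ := h
    rw [S.countP_meets_pick_self r hA, add_zero]
  · rw [zero_add]

lemma valid_of_mem_productGames (S : CMDRR m k') (T : CMDRR n k)
    (L₁ L₂ : Fin n × Fin n → Fin n) {g : Game (m * n)}
    (hg : g ∈ productGames S T L₁ L₂) : g.valid := by
  rcases Multiset.mem_add.mp hg with hg | hg
  · obtain ⟨A, -, hg⟩ := Multiset.mem_bind.mp hg
    obtain ⟨g₀, hg₀, rfl⟩ := Multiset.mem_map.mp hg
    induction g₀ using Sym2.ind with
    | _ P Q =>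
      obtain ⟨h₁, h₂⟩ := Game.valid_mk.mp (T.valid _ hg₀)
      exact Game.valid_prodTeam_mk (.inr h₁) (.inr h₂)
  · obtain ⟨g₀, hg₀, hg⟩ := Multiset.mem_bind.mp hg
    obtain ⟨P, -, rfl⟩ := Multiset.mem_map.mp hg
    obtain ⟨h₁, h₂⟩ := Game.valid_mk.mp ((Sym2.mk_out g₀).symm ▸ S.valid g₀ hg₀)
    exact Game.valid_prodTeam_mk (.inl h₁) (.inl h₂)

lemma countP_productGames_eq_one_of_not_mem (S : CMDRR m k') (T : CMDRR n k) (hL : MOLS L₁ L₂)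
    {r : Meeting} (hr : r = .partners ∨ r = .opposesMW) {x : Fin (m * n) × Fin (m * n)}
    (hx : x ∉ productSpouses S T) : (productGames S T L₁ L₂).countP (Game.Meets r x) = 1 := by
  obtain ⟨X, Y, rfl⟩ := exists_prodTeam_eq x
  rw [countP_productGames S T hL]
  simp only [Meeting.pick_self hr, exists_eq_right]
  split_ifs with hX
  · exact T.countP_meets_eq_one_of_not_mem hr fun hY =>
      hx (prodTeam_mem_productSpouses.mpr ⟨hX, hY⟩)
  · exact S.countP_meets_eq_one_of_not_mem hr hX

lemma not_manIn_and_womanIn_of_mem_productGames (S : CMDRR m k') (T : CMDRR n k)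
    (hL : MOLS L₁ L₂) {g : Game (m * n)} (hg : g ∈ productGames S T L₁ L₂)
    {x : Fin (m * n) × Fin (m * n)} (hx : x ∈ productSpouses S T) :
    ¬ (Game.manIn x.1 g ∧ Game.womanIn x.2 g) := by
  obtain ⟨X, Y, rfl⟩ := exists_prodTeam_eq x
  obtain ⟨hX, hY⟩ := prodTeam_mem_productSpouses.mp hx
  have hzero {r : Meeting} (hr : r = .partners ∨ r = .opposesMW) :
      (productGames S T L₁ L₂).countP (Game.Meets r (prodTeam X Y)) = 0 := by
    rw [countP_productGames S T hL, if_pos ⟨X, hX, Meeting.pick_self hr X⟩]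
    simpa only [Meeting.pick_self hr] using T.countP_meets_pick_self r hY
  rw [Game.manIn_and_womanIn_iff]
  rintro (h | h)
  exacts [Multiset.countP_eq_zero.mp (hzero (.inl rfl)) g hg h,
    Multiset.countP_eq_zero.mp (hzero (.inr rfl)) g hg h]

lemma countP_productGames_opposes (S : CMDRR m m) (T : CMDRR n k) (hL : MOLS L₁ L₂) (s : Sex)
    (i i' : Fin m) (x x' : Fin n) :
    (productGames S T L₁ L₂).countP
        (Game.Meets (.opposes s) (finProdFinEquiv (i, x), finProdFinEquiv (i', x'))) =
      if i = i' then T.games.countP (Game.Meets (.opposes s) (x, x'))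
      else S.games.countP (Game.Meets (.opposes s) (i, i')) := by
  have hdiag : (∃ A ∈ S.spouses, (Meeting.opposes s).pick A A = (i, i')) ↔ i = i' := by
    constructor
    · rintro ⟨A, -, h⟩
      obtain ⟨rfl, rfl⟩ := Prod.ext_iff.mp h
      rfl
    · rintro rfl
      obtain ⟨A, hA, rfl⟩ := Finset.mem_image.mp
        (S.image_sexOf_spouses_eq_univ s ▸ Finset.mem_univ i)
      exact ⟨A, hA, rfl⟩
  rw [show (finProdFinEquiv (i, x), finProdFinEquiv (i', x')) = prodTeam (i, i') (x, x') from rfl,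
    countP_productGames S T hL]
  simp only [hdiag]

lemma countP_productGames_opposes_of_mem (S : CMDRR m m) (T : CMDRR n k) (hL : MOLS L₁ L₂)
    (s : Sex) {a : Fin (m * n)} (ha : a ∈ (productSpouses S T).image s.of) {a' : Fin (m * n)}
    (ha' : a' ≠ a) :
    (productGames S T L₁ L₂).countP (Game.Meets (.opposes s) (a, a')) = 1 := by
  obtain ⟨⟨i, x⟩, rfl⟩ := finProdFinEquiv.surjective a
  obtain ⟨⟨i', x'⟩, rfl⟩ := finProdFinEquiv.surjective a'
  rw [countP_productGames_opposes S T hL]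
  split_ifs with hi
  · subst hi
    exact T.countP_opposes_of_mem s ((mem_image_sexOf_productSpouses s).mp ha).2
      fun h => ha' (by rw [h])
  · exact S.countP_opposes_of_mem s (by simp [S.image_sexOf_spouses_eq_univ]) (Ne.symm hi)

lemma exists_productGames_opposes_twice (S : CMDRR m m) (T : CMDRR n k) (hL : MOLS L₁ L₂)
    (s : Sex) {a : Fin (m * n)} (ha : a ∉ (productSpouses S T).image s.of) :
    ∃ a', a' ≠ a ∧ a' ∉ (productSpouses S T).image s.of ∧
      (productGames S T L₁ L₂).countP (Game.Meets (.opposes s) (a, a')) = 2 ∧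
      ∀ a'', a'' ≠ a → a'' ≠ a' →
        (productGames S T L₁ L₂).countP (Game.Meets (.opposes s) (a, a'')) = 1 := by
  obtain ⟨⟨i, x⟩, rfl⟩ := finProdFinEquiv.surjective a
  have hx : x ∉ T.spouses.image s.of := fun hx => ha <|
    (mem_image_sexOf_productSpouses s).mpr ⟨by simp [S.image_sexOf_spouses_eq_univ], hx⟩
  obtain ⟨x', hx'x, hx', htwice, honce⟩ := T.exists_opposes_twice s hx
  refine ⟨finProdFinEquiv (i, x'), by simpa using hx'x,
    fun h => hx' ((mem_image_sexOf_productSpouses s).mp h).2, ?_, fun a'' h₁ h₂ => ?_⟩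
  · rw [countP_productGames_opposes S T hL, if_pos rfl, htwice]
  · obtain ⟨⟨i'', x''⟩, rfl⟩ := finProdFinEquiv.surjective a''
    rw [countP_productGames_opposes S T hL]
    split_ifs with hi
    · subst hi
      exact honce x'' (by simpa using h₁) (by simpa using h₂)
    · exact S.countP_opposes_of_mem s (by simp [S.image_sexOf_spouses_eq_univ]) (Ne.symm hi)

noncomputable def CMDRR.product (S : CMDRR m m) (T : CMDRR n k) (hL : MOLS L₁ L₂) :
    CMDRR (m * n) (m * k) where
  spouses := productSpouses S T
  spouses_card := card_productSpouses S T
  spouses_inj1 _ hp _ hq := injOn_sexOf_productSpouses S T .man hp hq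
  spouses_inj2 _ hp _ hq := injOn_sexOf_productSpouses S T .woman hp hq
  games := productGames S T L₁ L₂
  valid _ := valid_of_mem_productGames S T L₁ L₂
  no_spouse_game _ hg _ := not_manIn_and_womanIn_of_mem_productGames S T hL hg
  partners_once a b h := by
    rw [Game.partners_eq_meets]
    exact countP_productGames_eq_one_of_not_mem S T hL (.inl rfl) h
  opposesMW_once a b h := by
    rw [Game.opposesMW_eq_meets]
    exact countP_productGames_eq_one_of_not_mem S T hL (.inr rfl) h
  spousedM_opposes a ha a' h := by
    rw [Game.opposesMM_eq_meets]
    exact countP_productGames_opposes_of_mem S T hL .man ha h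
  spousedW_opposes a ha a' h := by
    rw [Game.opposesWW_eq_meets]
    exact countP_productGames_opposes_of_mem S T hL .woman ha h
  unspousedM_opposes a ha := by
    simp only [Game.opposesMM_eq_meets]
    exact exists_productGames_opposes_twice S T hL .man ha
  unspousedW_opposes a ha := by
    simp only [Game.opposesWW_eq_meets]
    exact exists_productGames_opposes_twice S T hL .woman ha

end Product

/-- Product theorem: a CMDRR(n,k), a SAMDRR(m) (i.e. a CMDRR(m,m)), and two MOLS
of order `n` yield a CMDRR(mn, mk). -/
theorem cmdrr_product (n k m : ℕ) (hT : Nonempty (CMDRR n k))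
    (hS : Nonempty (CMDRR m m)) (L₁ L₂ : Fin n × Fin n → Fin n)
    (hL : MOLS L₁ L₂) : Nonempty (CMDRR (m * n) (m * k)) := by
  obtain ⟨T⟩ := hT
  obtain ⟨S⟩ := hS
  exact ⟨S.product T hL⟩
end

section
/- If a strict MMDRR(n) exists, then n is even. -/
open scoped Classical

/-! Each game contains exactly two partnerships and each of the `n²` man–woman pairs partners
exactly once, so `n² = 2 · #games`; hence `n` is even. -/

open Finset

theorem Sym2.sum_countP_mem {α : Type*} [Fintype α] [DecidableEq α] (s : Multiset (Sym2 α)) :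
    ∑ a, s.countP (a ∈ ·) = (s.map fun z => #z.toFinset).sum := by
  induction s using Multiset.induction with
  | empty => simp
  | cons z s ih =>
    simp only [Multiset.countP_cons, sum_add_distrib, ih, Multiset.map_cons, Multiset.sum_cons]
    rw [add_comm, sum_boole, Nat.cast_id]
    congr 2
    ext
    simp

theorem Sym2.sum_countP_mem_of_not_isDiag {α : Type*} [Fintype α] [DecidableEq α]
    (s : Multiset (Sym2 α)) (hs : ∀ z ∈ s, ¬z.IsDiag) :
    ∑ a, s.countP (a ∈ ·) = 2 * Multiset.card s := by
  rw [sum_countP_mem, Multiset.map_congr rfl fun z hz => card_toFinset_of_not_isDiag z (hs z hz),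
    Multiset.map_const', Multiset.sum_replicate, smul_eq_mul, mul_comm]

theorem Game.valid.not_isDiag {n : ℕ} {g : Game n} (hg : g.valid) : ¬g.IsDiag := by
  obtain ⟨a, b, rfl, hab, -⟩ := hg
  simpa using fun h : a = b => hab (congrArg Prod.fst h)

theorem strict_mmdrr_even_general (n : ℕ) (games : Multiset (Game n))
    (hvalid : ∀ g ∈ games, g.valid)
    (hpartners : ∀ m w : Fin n, games.countP (Game.partners m w) = 1) :
    Even n := by
  have hcount : n ^ 2 = 2 * Multiset.card games := calc
    n ^ 2 = ∑ p : Fin n × Fin n, games.countP (Game.partners p.1 p.2) := by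
      simp [sq, hpartners]
    _ = 2 * Multiset.card games := by
      convert Sym2.sum_countP_mem_of_not_isDiag games
        fun g hg => (hvalid g hg).not_isDiag using 4
      rfl
  exact (Nat.even_pow' two_ne_zero).mp ⟨_, hcount.trans (two_mul _)⟩

/-- If a strict MMDRR(n) exists (every man-woman pair partners exactly once and
opposes exactly once, and every pair of distinct same-sex players opposes at
least once), then `n` is even. -/
theorem strict_mmdrr_even (n : ℕ) (games : Multiset (Game n))
    (hvalid : ∀ g ∈ games, g.valid)
    (hpartners : ∀ m w : Fin n, games.countP (Game.partners m w) = 1)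
    (hopp : ∀ m w : Fin n, games.countP (Game.opposesMW m w) = 1)
    (hmm : ∀ m m' : Fin n, m ≠ m' → 1 ≤ games.countP (Game.opposesMM m m'))
    (hww : ∀ w w' : Fin n, w ≠ w' → 1 ≤ games.countP (Game.opposesWW w w')) :
    Even n :=
  strict_mmdrr_even_general n games hvalid hpartners
end

section
/- For each k ∈ {1, 3, 5} there exists a CMDRR(7,k). -/
open scoped Classical

/-!
Each of the three tournaments is exhibited explicitly, with spouse pairs `(i, i)` for `i < k`,
and all the conditions of `CMDRR` are verified by evaluation.
-/

namespace Sym2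

variable {α : Type*}

theorem exists_mk_eq_mk_and_iff (R : α → α → Prop) (x y : α) :
    (∃ a b, s(x, y) = s(a, b) ∧ R a b) ↔ R x y ∨ R y x := by
  constructor
  · rintro ⟨a, b, h, hab⟩
    rcases eq_iff.mp h with ⟨rfl, rfl⟩ | ⟨rfl, rfl⟩
    exacts [.inl hab, .inr hab]
  · rintro (h | h)
    exacts [⟨x, y, rfl, h⟩, ⟨y, x, eq_swap, h⟩]

abbrev decidableExistsEqMkAnd (R : α → α → Prop) [DecidableRel R] :
    DecidablePred fun z : Sym2 α => ∃ a b, z = s(a, b) ∧ R a b := fun z =>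
  z.recOnSubsingleton fun x y => decidable_of_iff' _ (exists_mk_eq_mk_and_iff R x y)

end Sym2

namespace Game

variable {n : ℕ}

instance : DecidablePred (valid (n := n)) := Sym2.decidableExistsEqMkAnd _
instance (m : Fin n) : DecidablePred (manIn m) := Sym2.decidableExistsEqMkAnd _
instance (w : Fin n) : DecidablePred (womanIn w) := Sym2.decidableExistsEqMkAnd _
instance (m w : Fin n) : DecidablePred (partners m w) := fun g =>
  inferInstanceAs (Decidable ((m, w) ∈ g))
instance (m w : Fin n) : DecidablePred (opposesMW m w) := Sym2.decidableExistsEqMkAnd _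
instance (m m' : Fin n) : DecidablePred (opposesMM m m') := Sym2.decidableExistsEqMkAnd _
instance (w w' : Fin n) : DecidablePred (opposesWW w w') := Sym2.decidableExistsEqMkAnd _

end Game

/-- The counts in the fields of `CMDRR` were elaborated with `Classical.propDecidable`, which does
not evaluate; restated here with the computable instances above, they can be checked by `decide`. -/
def IsCMDRR {n : ℕ} (k : ℕ) (spouses : Finset (Fin n × Fin n)) (games : Multiset (Game n)) :
    Prop :=
  spouses.card = k ∧
  (∀ p ∈ spouses, ∀ q ∈ spouses, p.1 = q.1 → p = q) ∧
  (∀ p ∈ spouses, ∀ q ∈ spouses, p.2 = q.2 → p = q) ∧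
  (∀ g ∈ games, g.valid) ∧
  (∀ g ∈ games, ∀ p ∈ spouses, ¬ (Game.manIn p.1 g ∧ Game.womanIn p.2 g)) ∧
  (∀ m w : Fin n, (m, w) ∉ spouses → games.countP (Game.partners m w) = 1) ∧
  (∀ m w : Fin n, (m, w) ∉ spouses → games.countP (Game.opposesMW m w) = 1) ∧
  (∀ m ∈ spouses.image Prod.fst, ∀ m' : Fin n, m' ≠ m →
    games.countP (Game.opposesMM m m') = 1) ∧
  (∀ w ∈ spouses.image Prod.snd, ∀ w' : Fin n, w' ≠ w →
    games.countP (Game.opposesWW w w') = 1) ∧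
  (∀ m : Fin n, m ∉ spouses.image Prod.fst →
    ∃ m' : Fin n, m' ≠ m ∧ m' ∉ spouses.image Prod.fst ∧
      games.countP (Game.opposesMM m m') = 2 ∧
      ∀ m'' : Fin n, m'' ≠ m → m'' ≠ m' → games.countP (Game.opposesMM m m'') = 1) ∧
  (∀ w : Fin n, w ∉ spouses.image Prod.snd →
    ∃ w' : Fin n, w' ≠ w ∧ w' ∉ spouses.image Prod.snd ∧
      games.countP (Game.opposesWW w w') = 2 ∧
      ∀ w'' : Fin n, w'' ≠ w → w'' ≠ w' → games.countP (Game.opposesWW w w'') = 1)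

set_option synthInstance.maxSize 1024 in
instance {n k : ℕ} (spouses : Finset (Fin n × Fin n)) (games : Multiset (Game n)) :
    Decidable (IsCMDRR k spouses games) := by
  -- otherwise `∀ g ∈ games` is decided by running through all of the fintype `Game n`
  have := @Multiset.decidableDforallMultiset (Game n) games
  unfold IsCMDRR
  infer_instance

def CMDRR.ofIsCMDRR {n k : ℕ} (spouses : Finset (Fin n × Fin n)) (games : Multiset (Game n))
    (h : IsCMDRR k spouses games) : CMDRR n k :=
  let ⟨hcard, hinj₁, hinj₂, hvalid, hspouse, hpart, hoppMW, hMM, hWW, hM, hW⟩ := h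
  { spouses, games
    spouses_card := hcard
    spouses_inj1 := hinj₁
    spouses_inj2 := hinj₂
    valid := hvalid
    no_spouse_game := hspouse
    -- `h` and the fields differ only in the (subsingleton) `DecidablePred` instances
    partners_once := by convert hpart
    opposesMW_once := by convert hoppMW
    spousedM_opposes := by convert hMM
    spousedW_opposes := by convert hWW
    unspousedM_opposes := by convert hM
    unspousedW_opposes := by convert hW }

section

set_option maxRecDepth 100000

def CMDRR.sevenOne : CMDRR 7 1 :=
  .ofIsCMDRR {(0, 0)}
    {s((0, 1), (1, 2)), s((0, 2), (2, 1)), s((0, 3), (3, 4)), s((0, 4), (4, 3)),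
      s((0, 5), (5, 6)), s((0, 6), (6, 5)), s((1, 0), (2, 3)), s((1, 1), (3, 5)),
      s((1, 3), (6, 6)), s((1, 4), (2, 0)), s((1, 5), (4, 2)), s((1, 6), (5, 4)),
      s((2, 2), (4, 6)), s((2, 4), (5, 5)), s((2, 5), (6, 3)), s((2, 6), (3, 1)),
      s((3, 0), (4, 5)), s((3, 2), (6, 4)), s((3, 3), (5, 2)), s((3, 6), (4, 0)),
      s((4, 1), (5, 3)), s((4, 4), (6, 1)), s((5, 0), (6, 2)), s((5, 1), (6, 0))}
    (by decide)

def CMDRR.sevenThree : CMDRR 7 3 :=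
  .ofIsCMDRR {(0, 0), (1, 1), (2, 2)}
    {s((0, 1), (2, 3)), s((0, 2), (1, 4)), s((0, 3), (3, 5)), s((0, 4), (4, 6)),
      s((0, 5), (5, 1)), s((0, 6), (6, 2)), s((1, 0), (6, 5)), s((1, 2), (3, 0)),
      s((1, 3), (4, 4)), s((1, 5), (2, 6)), s((1, 6), (5, 3)), s((2, 0), (5, 6)),
      s((2, 1), (4, 0)), s((2, 4), (3, 3)), s((2, 5), (6, 4)), s((3, 1), (6, 6)),
      s((3, 2), (4, 1)), s((3, 4), (5, 0)), s((3, 6), (4, 5)), s((4, 2), (5, 5)),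
      s((4, 3), (6, 0)), s((5, 2), (6, 3)), s((5, 4), (6, 1))}
    (by decide)

def CMDRR.sevenFive : CMDRR 7 5 :=
  .ofIsCMDRR {(0, 0), (1, 1), (2, 2), (3, 3), (4, 4)}
    {s((0, 1), (2, 3)), s((0, 2), (1, 4)), s((0, 3), (4, 2)), s((0, 4), (5, 5)),
      s((0, 5), (3, 6)), s((0, 6), (6, 1)), s((1, 0), (4, 3)), s((1, 2), (5, 6)),
      s((1, 3), (6, 5)), s((1, 5), (2, 0)), s((1, 6), (3, 4)), s((2, 1), (6, 4)),
      s((2, 4), (3, 0)), s((2, 5), (4, 6)), s((2, 6), (5, 3)), s((3, 1), (5, 0)),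
      s((3, 2), (4, 1)), s((3, 5), (6, 2)), s((4, 0), (6, 6)), s((4, 5), (5, 1)),
      s((5, 2), (6, 0)), s((5, 4), (6, 3))}
    (by decide)

end

/-- There exists a CMDRR(7,k) for each k ∈ {1, 3, 5}. -/
theorem cmdrr_7_exists : ∀ k ∈ ({1, 3, 5} : Set ℕ), Nonempty (CMDRR 7 k) := by
  rintro k (rfl | rfl | rfl)
  exacts [⟨.sevenOne⟩, ⟨.sevenThree⟩, ⟨.sevenFive⟩]
end

section
/- There exists a CMDRR(9,3) whose 39 games can be partitioned into 13 rounds of 3 games each, such that each player plays in at most one game per round. -/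
open scoped Classical

/-! The tournament is an explicit table, with spouse pairs (man `i`, woman `i`) for
`i = 6, 7, 8`. Once each game is unfolded into its two teams, every defining condition
becomes a statement about a concrete list of 39 games, checked by evaluation. -/

theorem Sym2.exists_eq_mk_and_iff {α : Type*} {P : α → α → Prop} (x y : α) :
    (∃ a b, s(x, y) = s(a, b) ∧ P a b) ↔ P x y ∨ P y x := by
  constructor
  · rintro ⟨a, b, h, hP⟩
    rcases Sym2.eq_iff.mp h with ⟨rfl, rfl⟩ | ⟨rfl, rfl⟩
    exacts [Or.inl hP, Or.inr hP]
  · rintro (h | h)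
    exacts [⟨x, y, rfl, h⟩, ⟨y, x, Sym2.eq_swap, h⟩]

namespace CMDRR

-- Each inner list is a round; `((m, w), (m', w'))` is the game of man `m` and woman `w`
-- against man `m'` and woman `w'`.
def table93 : List (List ((Fin 9 × Fin 9) × (Fin 9 × Fin 9))) := [
  [((6,7),(8,2)), ((2,8),(0,4)), ((7,0),(1,6))],
  [((8,7),(0,6)), ((6,0),(7,8)), ((1,5),(4,2))],
  [((1,7),(4,8)), ((6,1),(3,4)), ((0,0),(5,5))],
  [((2,7),(3,5)), ((6,8),(4,1)), ((5,3),(7,2))],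
  [((5,7),(6,4)), ((2,1),(7,3)), ((3,2),(4,6))],
  [((0,7),(1,1)), ((6,2),(2,0)), ((4,5),(5,4))],
  [((3,7),(5,0)), ((0,8),(2,2)), ((1,4),(8,3))],
  [((4,7),(2,3)), ((3,8),(7,5)), ((5,2),(8,1))],
  [((6,3),(0,5)), ((7,6),(4,4)), ((1,2),(3,1))],
  [((6,5),(1,3)), ((2,6),(5,1)), ((3,0),(8,4))],
  [((5,8),(3,3)), ((2,5),(8,6)), ((0,1),(4,0))],
  [((1,8),(5,6)), ((0,2),(7,4)), ((4,3),(8,0))],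
  [((0,3),(3,6)), ((2,4),(1,0)), ((7,1),(8,5))]]

def rounds93 : Multiset (Multiset (Game 9)) :=
  ↑((table93.map (List.map Sym2.mk.uncurry)).map ((↑) : List (Game 9) → Multiset (Game 9)))

-- `decide` gets stuck on the structurally recursive instance deciding `∀ x ∈ l, p x` for
-- long lists, hence the rewriting into `List.all`.
def tournament93 : CMDRR 9 3 where
  spouses := {(6,6), (7,7), (8,8)}
  spouses_card := by decide
  spouses_inj1 := by
    simp only [Finset.mem_insert, Finset.mem_singleton, forall_eq_or_imp, forall_eq]
    decide
  spouses_inj2 := by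
    simp only [Finset.mem_insert, Finset.mem_singleton, forall_eq_or_imp, forall_eq]
    decide
  games := ↑(table93.flatten.map Sym2.mk.uncurry)
  valid := by
    simp only [Multiset.mem_coe, List.forall_mem_map, Function.uncurry_def, Game.valid,
      Sym2.exists_eq_mk_and_iff, ← List.all_iff_forall_prop]
    decide
  no_spouse_game := by
    simp only [Multiset.mem_coe, List.forall_mem_map, Function.uncurry_def, Game.manIn,
      Game.womanIn, Sym2.exists_eq_mk_and_iff, ← List.all_iff_forall_prop]
    decide
  partners_once := by
    simp only [Multiset.coe_countP, List.countP_map, Function.comp_def, Function.uncurry_def,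
      Game.partners, Sym2.mem_iff]
    decide
  opposesMW_once := by
    simp only [Multiset.coe_countP, List.countP_map, Function.comp_def, Function.uncurry_def,
      Game.opposesMW, Sym2.exists_eq_mk_and_iff]
    decide
  spousedM_opposes := by
    simp only [Multiset.coe_countP, List.countP_map, Function.comp_def, Function.uncurry_def,
      Game.opposesMM, Sym2.exists_eq_mk_and_iff]
    decide
  spousedW_opposes := by
    simp only [Multiset.coe_countP, List.countP_map, Function.comp_def, Function.uncurry_def,
      Game.opposesWW, Sym2.exists_eq_mk_and_iff]
    decide
  unspousedM_opposes := by
    simp only [Multiset.coe_countP, List.countP_map, Function.comp_def, Function.uncurry_def,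
      Game.opposesMM, Sym2.exists_eq_mk_and_iff]
    decide
  unspousedW_opposes := by
    simp only [Multiset.coe_countP, List.countP_map, Function.comp_def, Function.uncurry_def,
      Game.opposesWW, Sym2.exists_eq_mk_and_iff]
    decide

theorem sum_rounds93 : rounds93.sum = tournament93.games := by
  rw [rounds93, ← Multiset.join, Multiset.coe_join, ← List.map_flatten]
  rfl

theorem isRound_of_mem_rounds93 : ∀ r ∈ rounds93, IsRound r ∧ Multiset.card r = 3 := by
  simp only [rounds93, Multiset.mem_coe, List.forall_mem_map, List.map_map, IsRound,
    Multiset.coe_countP, List.countP_map, Function.comp_def, Function.uncurry_def, Game.manIn,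
    Game.womanIn, Sym2.exists_eq_mk_and_iff, Multiset.coe_card, List.length_map]
  decide

end CMDRR

/-- There is a CMDRR(9,3) whose 39 games split into 13 rounds of 3 games each. -/
theorem cmdrr_9_3_resolution :
    ∃ T : CMDRR 9 3, ∃ rounds : Multiset (Multiset (Game 9)),
      rounds.sum = T.games ∧ Multiset.card rounds = 13 ∧
      ∀ r ∈ rounds, IsRound r ∧ Multiset.card r = 3 :=
  ⟨CMDRR.tournament93, CMDRR.rounds93, CMDRR.sum_rounds93, rfl, CMDRR.isRound_of_mem_rounds93⟩
end

section
/- There exists a CMDRR(10,2) whose 49 games can be partitioned into 16 rounds of 3 games each and one round of 1 game, such that each player plays in at most one game per round. -/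
open scoped Classical

/-!
The tournament is given explicitly: men and women are numbered `0, …, 9`, the spouse pairs are
`(0, 0)` and `(1, 1)`, and the 49 games are listed round by round. Every condition on a CMDRR and
on a round only asks which teams, men, women and cross pairs (a man with the woman of the other
team) occur in a game; phrased that way each condition is decidable and is checked by evaluation.
-/

theorem Sym2.exists_mk_eq_mk_and_iff_s18 {α : Type*} {P : α → α → Prop} {x y : α} :
    (∃ a b, s(x, y) = s(a, b) ∧ P a b) ↔ P x y ∨ P y x := by
  constructor
  · rintro ⟨a, b, h, hP⟩
    rcases Sym2.eq_iff.1 h with ⟨rfl, rfl⟩ | ⟨rfl, rfl⟩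
    exacts [.inl hP, .inr hP]
  · rintro (h | h)
    exacts [⟨x, y, rfl, h⟩, ⟨y, x, Sym2.eq_swap, h⟩]

namespace Game

variable {n : ℕ}

def crossPairs (g : Game n) : Sym2 (Fin n × Fin n) :=
  Sym2.lift ⟨fun a b => s((a.1, b.2), (b.1, a.2)), fun _ _ => Sym2.eq_swap⟩ g

theorem valid_iff {g : Game n} :
    g.valid ↔ ¬ (g.map Prod.fst).IsDiag ∧ ¬ (g.map Prod.snd).IsDiag := by
  induction g using Sym2.ind
  simp only [Game.valid, Sym2.exists_mk_eq_mk_and_iff_s18]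
  simp [eq_comm]

theorem manIn_iff {m : Fin n} {g : Game n} : manIn m g ↔ m ∈ g.map Prod.fst := by
  induction g using Sym2.ind
  simp only [Game.manIn, Sym2.exists_mk_eq_mk_and_iff_s18]
  simp [eq_comm]

theorem womanIn_iff {w : Fin n} {g : Game n} : womanIn w g ↔ w ∈ g.map Prod.snd := by
  induction g using Sym2.ind
  simp only [Game.womanIn, Sym2.exists_mk_eq_mk_and_iff_s18]
  simp [eq_comm]

theorem opposesMM_iff {m m' : Fin n} {g : Game n} :
    opposesMM m m' g ↔ g.map Prod.fst = s(m, m') := by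
  induction g using Sym2.ind
  simp only [Game.opposesMM, Sym2.exists_mk_eq_mk_and_iff_s18]
  simp [eq_comm]

theorem opposesWW_iff {w w' : Fin n} {g : Game n} :
    opposesWW w w' g ↔ g.map Prod.snd = s(w, w') := by
  induction g using Sym2.ind
  simp only [Game.opposesWW, Sym2.exists_mk_eq_mk_and_iff_s18]
  simp [eq_comm]

theorem opposesMW_iff {m w : Fin n} {g : Game n} :
    opposesMW m w g ↔ (m, w) ∈ g.crossPairs := by
  induction g using Sym2.ind
  simp only [Game.opposesMW, Sym2.exists_mk_eq_mk_and_iff_s18]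
  simp [crossPairs, Prod.ext_iff, eq_comm]

end Game

namespace Cmdrr10

abbrev game (m w m' w' : Fin 10) : Game 10 := s((m, w), (m', w'))

def spouses : Finset (Fin 10 × Fin 10) := {(0, 0), (1, 1)}

def rounds : List (List (Game 10)) :=
  [[game 0 5 3 2, game 8 0 9 3, game 4 4 5 6],
   [game 2 7 8 4, game 5 1 6 5, game 1 2 9 8],
   [game 2 1 3 9, game 5 0 8 8, game 6 7 9 2],
   [game 4 7 5 5, game 8 1 9 6, game 3 4 7 3],
   [game 2 2 7 1, game 1 5 6 4, game 0 3 5 9],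
   [game 1 8 8 6, game 6 1 7 0, game 2 9 9 7],
   [game 1 3 2 5, game 5 4 9 9, game 0 1 8 7],
   [game 3 8 9 4, game 1 9 4 0, game 5 3 7 2],
   [game 3 1 5 8, game 0 2 1 4, game 4 6 6 3],
   [game 1 6 7 9, game 2 8 4 5, game 6 2 8 3],
   [game 4 8 7 7, game 2 6 5 2, game 3 5 8 9],
   [game 3 7 6 6, game 4 9 8 2, game 0 8 2 3],
   [game 0 9 6 8, game 2 0 3 6, game 7 4 8 5],
   [game 1 7 3 3, game 0 4 4 1, game 7 5 9 0],
   [game 4 3 9 1, game 2 4 6 0, game 0 7 7 6],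
   [game 6 9 7 8, game 3 0 4 2, game 0 6 9 5]]

def lastRound : List (Game 10) := [game 1 0 5 7]

def games : List (Game 10) := rounds.flatten ++ lastRound

set_option maxRecDepth 10000 in
def tournament : CMDRR 10 2 where
  spouses := spouses
  spouses_card := rfl
  spouses_inj1 := by decide
  spouses_inj2 := by decide
  games := games
  valid := by
    simp only [Multiset.mem_coe, Game.valid_iff, ← List.forall_iff_forall_mem]
    decide
  no_spouse_game := by
    simp only [Multiset.mem_coe, Game.manIn_iff, Game.womanIn_iff, ← List.forall_iff_forall_mem]
    decide
  partners_once := by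
    simp only [Game.partners.eq_1, Multiset.coe_countP]
    decide
  opposesMW_once := by
    simp only [Game.opposesMW_iff, Multiset.coe_countP]
    decide
  spousedM_opposes := by
    simp only [Game.opposesMM_iff, Multiset.coe_countP]
    decide
  spousedW_opposes := by
    simp only [Game.opposesWW_iff, Multiset.coe_countP]
    decide
  unspousedM_opposes := by
    simp only [Game.opposesMM_iff, Multiset.coe_countP]
    decide
  unspousedW_opposes := by
    simp only [Game.opposesWW_iff, Multiset.coe_countP]
    decide

theorem isRound_and_length_of_mem_rounds :
    ∀ r ∈ rounds, IsRound (r : Multiset (Game 10)) ∧ r.length = 3 := by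
  simp only [IsRound, Game.manIn_iff, Game.womanIn_iff, Multiset.coe_countP,
    ← List.forall_iff_forall_mem]
  decide

theorem isRound_lastRound : IsRound (lastRound : Multiset (Game 10)) := by
  simp only [IsRound, Game.manIn_iff, Game.womanIn_iff, Multiset.coe_countP]
  decide

end Cmdrr10

/-- There is a CMDRR(10,2) whose 49 games split into 16 rounds of 3 games each
and one round of 1 game. -/
theorem cmdrr_10_2_resolution :
    ∃ T : CMDRR 10 2, ∃ rounds : Multiset (Multiset (Game 10)),
      ∃ short : Multiset (Game 10),
      rounds.sum + short = T.games ∧ Multiset.card rounds = 16 ∧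
      (∀ r ∈ rounds, IsRound r ∧ Multiset.card r = 3) ∧
      IsRound short ∧ Multiset.card short = 1 := by
  refine ⟨Cmdrr10.tournament, (Cmdrr10.rounds.map (↑) : List (Multiset (Game 10))),
    Cmdrr10.lastRound, rfl, rfl, ?_, Cmdrr10.isRound_lastRound, rfl⟩
  simpa only [Multiset.mem_coe, List.mem_map, forall_exists_index, and_imp,
    forall_apply_eq_imp_iff₂, Multiset.coe_card] using Cmdrr10.isRound_and_length_of_mem_rounds
end
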